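/- arXiv:1202.0172 — 3 statements merged into one kernel-verified Lean document; each statement's English description precedes it below -/
import Mathlib

section
/- Let x be the unique real root of 2x^3 - 4x^2 + 4x - 1 = 0, let c = x - 1 and b = (1 + c^2)/2. Then the reflection of the point P = (0,0) across the line f through (0,b) with direction (1,c) equals (1-x, 1), and the reflection of Q = (1/4, 0) across f equals (3/4, 1 - y) where y = x - x^2. -/
/-!
Put `c = x - 1`. Choosing `b = (1 + c²)/2` is exactly what makes the fold carry the corner
`(0,0)` onto the top edge, at `(-c, 1) = (1 - x, 1)`, whatever `c` is. For `Q = (1/4, 0)` the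
first coordinate of the image is `3/4`, and the second is `1 + c + c² = 1 - (x - x²)`, precisely
when `2c³ + 2c² + 2c + 1 = 0`, which is the cubic for `x` rewritten in `c`.
-/

/-- Reflection across the line through `(0, b)` with direction `(1, c)`. -/
noncomputable def reflectAcross (b c : ℝ) (v : ℝ × ℝ) : ℝ × ℝ :=
  ((1 / (1 + c ^ 2)) * ((1 - c ^ 2) * v.1 + 2 * c * (v.2 - b)),
    b + (1 / (1 + c ^ 2)) * (2 * c * v.1 + (c ^ 2 - 1) * (v.2 - b)))

theorem reflectAcross_zero (c : ℝ) : reflectAcross ((1 + c ^ 2) / 2) c (0, 0) = (-c, 1) := by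
  have hpos : (1 : ℝ) + c ^ 2 ≠ 0 := by positivity
  simp only [reflectAcross, Prod.mk.injEq]
  constructor <;> field_simp <;> ring

theorem reflectAcross_quarter_zero {c : ℝ} (hc : 2 * c ^ 3 + 2 * c ^ 2 + 2 * c + 1 = 0) :
    reflectAcross ((1 + c ^ 2) / 2) c (1 / 4, 0) = (3 / 4, 1 + c + c ^ 2) := by
  have hpos : (1 : ℝ) + c ^ 2 ≠ 0 := by positivity
  simp only [reflectAcross, Prod.mk.injEq]
  constructor
  · field_simp
    linear_combination (-2 : ℝ) * hc
  · field_simp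
    linear_combination (-4 * c) * hc

/-- For the snub-cube folding: with `x` the unique real root of `2x^3-4x^2+4x-1=0`,
`c = x - 1`, `b = (1+c^2)/2`, the reflection across the line through `(0,b)` with
direction `(1,c)` sends `P=(0,0)` to `(1-x,1)` and `Q=(1/4,0)` to `(3/4, 1-y)`
where `y = x - x^2`. -/
theorem snub_cube_folding_reflection (x c b : ℝ) (R : ℝ × ℝ → ℝ × ℝ)
    (hx : 2 * x ^ 3 - 4 * x ^ 2 + 4 * x - 1 = 0)
    (hc : c = x - 1) (hb : b = (1 + c ^ 2) / 2)
    (hR : ∀ v : ℝ × ℝ,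
      R v = ((1 / (1 + c ^ 2)) * ((1 - c ^ 2) * v.1 + 2 * c * (v.2 - b)),
             b + (1 / (1 + c ^ 2)) * (2 * c * v.1 + (c ^ 2 - 1) * (v.2 - b)))) :
    R (0, 0) = (1 - x, 1) ∧ R (1 / 4, 0) = (3 / 4, 1 - (x - x ^ 2)) := by
  have hR' : R = reflectAcross b c := funext hR
  have hcubic : 2 * c ^ 3 + 2 * c ^ 2 + 2 * c + 1 = 0 := by
    subst hc
    linear_combination hx
  subst hR' hb
  refine ⟨?_, ?_⟩
  · rw [reflectAcross_zero, hc, neg_sub]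
  · rw [reflectAcross_quarter_zero hcubic, hc]
    ring_nf
end

section
/- Let Φ = (1+√5)/2 and let x, y be real numbers satisfying y^2 = -Φx^2 + Φx - Φy + xy and (Φ-2)y^2 = (3-Φ)x^2 - 4x + 1 + (5-3Φ)xy + 2(Φ-1)y. If (4Φ-7)x + 1 - Φ ≠ 0 then y = ((4-2Φ)x^2 + (Φ-5)x + 1)/((4Φ-7)x + 1 - Φ), and moreover ((25Φ-41)x^3 + (30-17Φ)x^2 - 5x + Φ)·x = 0. -/
/-!
Subtracting `(Φ - 2)` times the first equation from the second cancels `y²` and leaves a relation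
`D · y = N` that is linear in `y`. Substituting it into `D²` times the first equation gives a quartic
in `x` which, modulo `Φ² = Φ + 1`, is `-Φ² · x · (cubic)`; since `Φ (Φ - 1) = 1`, the factor `Φ²` is a
unit.
-/

namespace SnubDodecahedron

variable {R : Type*} [CommRing R] {φ x y : R}

theorem isUnit_of_sq_eq_add_one (hφ : φ ^ 2 = φ + 1) : IsUnit φ :=
  .of_mul_eq_one (φ - 1) (by linear_combination hφ)

theorem linear_relation_of_equilateral (hφ : φ ^ 2 = φ + 1)
    (h1 : y ^ 2 = -φ * x ^ 2 + φ * x - φ * y + x * y)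
    (h2 : (φ - 2) * y ^ 2
      = (3 - φ) * x ^ 2 - 4 * x + 1 + (5 - 3 * φ) * x * y + 2 * (φ - 1) * y) :
    ((4 * φ - 7) * x + 1 - φ) * y = (4 - 2 * φ) * x ^ 2 + (φ - 5) * x + 1 := by
  linear_combination (x ^ 2 - x + y) * hφ - (φ - 2) * h1 + h2

theorem quartic_eq_neg_sq_mul (hφ : φ ^ 2 = φ + 1) :
    ((4 - 2 * φ) * x ^ 2 + (φ - 5) * x + 1) ^ 2
      + (φ - x) * ((4 * φ - 7) * x + 1 - φ) * ((4 - 2 * φ) * x ^ 2 + (φ - 5) * x + 1)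
      + ((4 * φ - 7) * x + 1 - φ) ^ 2 * (φ * x ^ 2 - φ * x)
    = -φ ^ 2 * (((25 * φ - 41) * x ^ 3 + (30 - 17 * φ) * x ^ 2 - 5 * x + φ) * x) := by
  grind

theorem cubic_mul_eq_zero (hφ : φ ^ 2 = φ + 1)
    (h1 : y ^ 2 = -φ * x ^ 2 + φ * x - φ * y + x * y)
    (hlin : ((4 * φ - 7) * x + 1 - φ) * y = (4 - 2 * φ) * x ^ 2 + (φ - 5) * x + 1) :
    ((25 * φ - 41) * x ^ 3 + (30 - 17 * φ) * x ^ 2 - 5 * x + φ) * x = 0 := by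
  have hfactor := quartic_eq_neg_sq_mul (x := x) hφ
  set D := (4 * φ - 7) * x + 1 - φ
  set N := (4 - 2 * φ) * x ^ 2 + (φ - 5) * x + 1
  have hquartic : N ^ 2 + (φ - x) * D * N + D ^ 2 * (φ * x ^ 2 - φ * x) = 0 := by
    linear_combination D ^ 2 * h1 - (N + D * y + (φ - x) * D) * hlin
  have hscaled : φ ^ 2 * (((25 * φ - 41) * x ^ 3 + (30 - 17 * φ) * x ^ 2 - 5 * x + φ) * x) = 0 := by
    linear_combination hfactor - hquartic
  exact ((isUnit_of_sq_eq_add_one hφ).pow 2).mul_right_eq_zero.mp hscaled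

end SnubDodecahedron

/-- The two equilateral-triangle conditions for the snub dodecahedron vertices imply
the expression for `y` and the cubic equation for `x`. Here `Φ = (1+√5)/2`. -/
theorem snub_dodecahedron_equilateral_conditions (x y : ℝ)
    (h1 : y ^ 2 = -((1 + Real.sqrt 5) / 2) * x ^ 2 + ((1 + Real.sqrt 5) / 2) * x
        - ((1 + Real.sqrt 5) / 2) * y + x * y)
    (h2 : ((1 + Real.sqrt 5) / 2 - 2) * y ^ 2
        = (3 - (1 + Real.sqrt 5) / 2) * x ^ 2 - 4 * x + 1
          + (5 - 3 * ((1 + Real.sqrt 5) / 2)) * x * y + 2 * ((1 + Real.sqrt 5) / 2 - 1) * y)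
    (h3 : (4 * ((1 + Real.sqrt 5) / 2) - 7) * x + 1 - (1 + Real.sqrt 5) / 2 ≠ 0) :
    y = ((4 - 2 * ((1 + Real.sqrt 5) / 2)) * x ^ 2 + ((1 + Real.sqrt 5) / 2 - 5) * x + 1)
        / ((4 * ((1 + Real.sqrt 5) / 2) - 7) * x + 1 - (1 + Real.sqrt 5) / 2) ∧
    ((25 * ((1 + Real.sqrt 5) / 2) - 41) * x ^ 3 + (30 - 17 * ((1 + Real.sqrt 5) / 2)) * x ^ 2
      - 5 * x + (1 + Real.sqrt 5) / 2) * x = 0 := by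
  have hΦ : ((1 + Real.sqrt 5) / 2) ^ 2 = (1 + Real.sqrt 5) / 2 + 1 := Real.goldenRatio_sq
  have hlin := SnubDodecahedron.linear_relation_of_equilateral hΦ h1 h2
  exact ⟨(eq_div_iff h3).mpr (by rw [mul_comm]; exact hlin),
    SnubDodecahedron.cubic_mul_eq_zero hΦ h1 hlin⟩
end

section
/- Let a, b, c > 0. In an equilateral triangle with each side divided into five parts of lengths proportional to a : b : c : b : a, the inner hexagon formed by the six division lines is regular if and only if c = b - 2a; assuming this, the hexagon side has length proportional to (b-a), and the conditions |UV| = √2·|TU| (regular octagon) force b = (√2+1)a, c = (√2-1)a, while |UV| = Φ·|TU| (regular decagon, Φ = (1+√5)/2) force b = (Φ+1)a, c = (Φ-1)a. -/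
/-! Every ratio in the statement is a length divided by the same positive number
`2a + 2b + c`, so each condition reduces to a linear relation among `a, b, c`. Under
`c = b - 2a` the polygon condition `b - a = k·a` pins down `b = (k+1)a`, and then
`c = (k-1)a`. -/

theorem div_eq_mul_div_iff {K : Type*} [Field K] {s : K} (hs : s ≠ 0) (x y k : K) :
    x / s = k * (y / s) ↔ x = k * y := by
  rw [← mul_div_assoc, div_left_inj' hs]

theorem two_mul_sub_eq_add_iff {R : Type*} [CommRing R] (a b c : R) :
    b + c = 2 * (b - a) ↔ c = b - 2 * a := by
  constructor <;> intro h <;> linear_combination h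

theorem sub_eq_mul_iff_of_eq_sub_two_mul {R : Type*} [CommRing R] {a b c : R}
    (hc : c = b - 2 * a) (k : R) :
    b - a = k * a ↔ b = (k + 1) * a ∧ c = (k - 1) * a := by
  constructor
  · intro h
    exact ⟨by linear_combination h, by linear_combination hc + h⟩
  · rintro ⟨hb, -⟩
    linear_combination hb

/-- For an equilateral triangle whose sides are divided in ratios `a : b : c : b : a`
(side length proportional to `s = 2a + 2b + c`): the inner hexagon is regular iff
`|RQ| = 2|C'R|`, i.e. `(b+c)/s = 2(b-a)/s`, which holds iff `c = b - 2a`; its side is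
proportional to `b - a`. Assuming this, the octagon condition `|UV| = √2·|TU|`, i.e.
`(b-a)/s = √2·a/s`, holds iff `b = (√2+1)a` and `c = (√2-1)a`, and the decagon
condition `|UV| = Φ·|TU|` holds iff `b = (Φ+1)a` and `c = (Φ-1)a`, `Φ = (1+√5)/2`. -/
theorem truncated_construction_ratios (a b c : ℝ) (ha : 0 < a) (hb : 0 < b) (hc : 0 < c) :
    ((b + c) / (2 * a + 2 * b + c) = 2 * ((b - a) / (2 * a + 2 * b + c)) ↔ c = b - 2 * a) ∧
    (c = b - 2 * a →
      (((b - a) / (2 * a + 2 * b + c) = Real.sqrt 2 * (a / (2 * a + 2 * b + c))) ↔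
        (b = (Real.sqrt 2 + 1) * a ∧ c = (Real.sqrt 2 - 1) * a)) ∧
      (((b - a) / (2 * a + 2 * b + c)
          = ((1 + Real.sqrt 5) / 2) * (a / (2 * a + 2 * b + c))) ↔
        (b = ((1 + Real.sqrt 5) / 2 + 1) * a ∧ c = ((1 + Real.sqrt 5) / 2 - 1) * a))) := by
  have hs : 2 * a + 2 * b + c ≠ 0 := by positivity
  simp only [div_eq_mul_div_iff hs]
  refine ⟨two_mul_sub_eq_add_iff a b c, fun hcab => ?_⟩
  exact ⟨sub_eq_mul_iff_of_eq_sub_two_mul hcab _, sub_eq_mul_iff_of_eq_sub_two_mul hcab _⟩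
end
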